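/- arXiv:1808.04005 — 2 statements merged into one kernel-verified Lean document; each statement's English description precedes it below -/
import Mathlib

section
/- Let p1, p2, p3, p4 be points in the plane forming a non-degenerate rhombus (i.e., p2 - p1 = p3 - p4 and p3 - p2 = p4 - p1, with these two difference vectors linearly independent). If v1, v2, v3, v4 are vectors in the plane satisfying (v2 - v1)·(p2 - p1) = 0, (v3 - v2)·(p3 - p2) = 0, (v4 - v3)·(p4 - p3) = 0, and (v1 - v4)·(p1 - p4) = 0, then v1 + v3 = v2 + v4. -/
open scoped RealInnerProductSpace

/-- The Rhombus Lemma: for any infinitesimal motion of a non-degenerate rhombus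
`p₁p₂p₃p₄` in the plane, the velocities satisfy `v₁ + v₃ = v₂ + v₄`. -/
theorem rhombus_lemma (p1 p2 p3 p4 v1 v2 v3 v4 : EuclideanSpace ℝ (Fin 2))
    (h12 : p2 - p1 = p3 - p4) (h23 : p3 - p2 = p4 - p1)
    (hind : LinearIndependent ℝ ![p2 - p1, p3 - p2])
    (e1 : ⟪v2 - v1, p2 - p1⟫ = 0)
    (e2 : ⟪v3 - v2, p3 - p2⟫ = 0)
    (e3 : ⟪v4 - v3, p4 - p3⟫ = 0)
    (e4 : ⟪v1 - v4, p1 - p4⟫ = 0) :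
    v1 + v3 = v2 + v4 := by
  set w := v1 + v3 - (v2 + v4) with hw
  have ha : ⟪w, p2 - p1⟫ = 0 := by
    have hsum : w = (v1 - v2) + (v3 - v4) := by rw [hw]; abel
    have h1 : ⟪v1 - v2, p2 - p1⟫ = 0 := by
      have : (v1 - v2) = -(v2 - v1) := by abel
      rw [this, inner_neg_left, e1, neg_zero]
    have h2 : ⟪v3 - v4, p2 - p1⟫ = 0 := by
      rw [h12]
      have hv : (v3 - v4) = -(v4 - v3) := by abel
      have hp : (p3 - p4) = -(p4 - p3) := by abel
      rw [hv, hp, inner_neg_neg, e3]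
    rw [hsum, inner_add_left, h1, h2, add_zero]
  have hb : ⟪w, p3 - p2⟫ = 0 := by
    have hsum : w = (v3 - v2) + (v1 - v4) := by rw [hw]; abel
    have h2 : ⟪v1 - v4, p3 - p2⟫ = 0 := by
      rw [h23]
      have hp : (p4 - p1) = -(p1 - p4) := by abel
      rw [hp, inner_neg_right, e4, neg_zero]
    rw [hsum, inner_add_left, e2, h2, add_zero]
  have hcard : Fintype.card (Fin 2) = Module.finrank ℝ (EuclideanSpace ℝ (Fin 2)) := by
    simp
  let B := basisOfLinearIndependentOfCardEqFinrank hind hcard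
  have hB : ∀ i, ⟪w, B i⟫ = 0 := by
    intro i
    have hBi : B i = ![p2 - p1, p3 - p2] i :=
      coe_basisOfLinearIndependentOfCardEqFinrank hind hcard ▸ rfl
    fin_cases i <;>
      rw [hBi] <;>
      simp only [Matrix.cons_val_zero, Matrix.cons_val_one, Matrix.head_cons] <;>
      first
        | exact ha
        | exact hb
  have hw0 : w = 0 := by
    have : ⟪w, w⟫ = 0 := by
      nth_rewrite 2 [← B.sum_repr w]
      rw [inner_sum]
      simp only [real_inner_smul_right, hB, mul_zero, Finset.sum_const_zero]
    exact inner_self_eq_zero.mp this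
  have := sub_eq_zero.mp hw0
  exact this
end

section
/- Suppose F' is a framework obtained from an infinitesimally rigid framework F in ℝ² by adding one new joint q connected by two bars to joints x1, x2 of F, where q - x1 and q - x2 are linearly independent. Then F' is infinitesimally rigid. -/
open Matrix

/-- A framework in `ℝ²` with joints indexed by `V`, positions `p`, and bars
`E`, is infinitesimally rigid if every infinitesimal motion of the framework is
the restriction of an infinitesimal motion of the plane. -/
def IsInfRigid {V : Type*} (p : V → (Fin 2 → ℝ)) (E : Set (V × V)) : Prop :=
  ∀ g : V → (Fin 2 → ℝ),
    (∀ e ∈ E, dotProduct (g e.1 - g e.2) (p e.1 - p e.2) = 0) →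
    ∃ f : (Fin 2 → ℝ) → (Fin 2 → ℝ),
      (∀ x y, dotProduct (f x - f y) (x - y) = 0) ∧ ∀ v, g v = f (p v)

lemma perp_two_indep {a b w : Fin 2 → ℝ}
    (hind : LinearIndependent ℝ ![a, b])
    (ha : dotProduct w a = 0) (hb : dotProduct w b = 0) : w = 0 := by
  have hspan : Submodule.span ℝ (Set.range ![a, b]) = ⊤ := by
    apply hind.span_eq_top_of_card_eq_finrank
    simp [Module.finrank_fintype_fun_eq_card]
  have hall : ∀ v : Fin 2 → ℝ, dotProduct w v = 0 := by
    intro v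
    have hv : v ∈ Submodule.span ℝ (Set.range ![a, b]) := hspan ▸ Submodule.mem_top
    induction hv using Submodule.span_induction with
    | mem x hx =>
      rcases hx with ⟨i, rfl⟩
      fin_cases i <;> simp only [Matrix.cons_val_zero, Matrix.cons_val_one, Matrix.head_cons] <;> assumption
    | zero => simp
    | add x y _ _ hx hy => simp [dotProduct_add, hx, hy]
    | smul c x _ hx => simp [dotProduct_smul, hx]
  exact dotProduct_self_eq_zero.mp (hall w)

/-- 0-extension: adding to an infinitesimally rigid plane framework a new joint
`q` joined by two bars to joints `x1, x2` with `q - p x1` and `q - p x2`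
linearly independent yields an infinitesimally rigid framework. -/
theorem zero_extension_rigid {V : Type*} (p : V → (Fin 2 → ℝ)) (E : Set (V × V))
    (hF : IsInfRigid p E) (x1 x2 : V) (q : Fin 2 → ℝ)
    (hind : LinearIndependent ℝ ![q - p x1, q - p x2]) :
    IsInfRigid (fun o : Option V => o.elim q p)
      ({(none, some x1), (none, some x2)} ∪
        {e | ∃ a b, (a, b) ∈ E ∧ e = (some a, some b)}) := by
  intro g hg
  obtain ⟨f, hf, hgf⟩ := hF (fun v => g (some v)) (by
    intro e he
    have := hg (some e.1, some e.2) (Or.inr ⟨e.1, e.2, he, by simp⟩)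
    simpa using this)
  have h1 := hg (none, some x1) (Or.inl (Or.inl rfl))
  have h2 := hg (none, some x2) (Or.inl (Or.inr rfl))
  simp only [Option.elim] at h1 h2
  have key : ∀ x : V, dotProduct (g none - g (some x)) (q - p x) = 0 →
      dotProduct (g none - f q) (q - p x) = 0 := by
    intro x hx
    have e1 : g none - f q = (g none - g (some x)) - (f q - f (p x)) := by
      rw [hgf x]; abel
    rw [e1, sub_dotProduct, hx, hf q (p x), sub_zero]
  have hw : g none - f q = 0 := perp_two_indep hind (key x1 h1) (key x2 h2)
  refine ⟨f, hf, fun o => ?_⟩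
  cases o with
  | none => simpa [sub_eq_zero] using hw
  | some v => simpa using hgf v
end
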